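/- Let Ω ⊂ ℝ² be a bounded open set containing the closed disk closure(ω*) of radius R0 centered at the origin, with |Ω| = πR1² for some R1 > R0, and Ω not equal (up to measure zero) to the disk Ω* of radius R1. Let Ω₀ = Ω \ closure(ω*) and Ω₀* = Ω* \ closure(ω*). Let u be the positive, strictly increasing radial ground state of the Dirichlet(inner)–Neumann(outer) problem for -Δ + Φ²/|x|² on Ω₀* with Φ ∈ [0, 1/2] and eigenvalue μ0 = (∫_{Ω₀*}(|∇u|² + Φ²|x|^{-2}u²))/(∫_{Ω₀*} u²). Define f(x) = 0 for |x| ≤ R0, f(x) = u(|x|) for R0 < |x| < R1, f(x) = u(R1) for |x| ≥ R1. Then (∫_{Ω₀}(|∇f|² + Φ²|x|^{-2}f²) dx) / (∫_{Ω₀} f² dx) < μ0. -/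

import Mathlib

open MeasureTheory Metric

set_option maxHeartbeats 2000000

abbrev E2 := EuclideanSpace ℝ (Fin 2)

lemma hasFDerivAt_radial (u : ℝ → ℝ) (x : E2) (hx : x ≠ 0)
    (hu : DifferentiableAt ℝ u ‖x‖) :
    HasFDerivAt (fun y : E2 => u ‖y‖)
      ((deriv u ‖x‖ * ‖x‖⁻¹) • innerSL ℝ x) x := by
  have hnx : (0:ℝ) < ‖x‖ := norm_pos_iff.mpr hx
  have h1 : HasFDerivAt (fun y : E2 => ‖y‖^2) ((2:ℕ) • innerSL ℝ x) x := by
    simpa using (hasFDerivAt_id x).norm_sq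
  have h2 : HasDerivAt Real.sqrt (1 / (2 * Real.sqrt (‖x‖^2))) (‖x‖^2) := by
    apply Real.hasDerivAt_sqrt; positivity
  have h3 : HasFDerivAt (fun y : E2 => Real.sqrt (‖y‖^2))
      ((1 / (2 * Real.sqrt (‖x‖^2))) • ((2:ℕ) • innerSL ℝ x)) x := h2.comp_hasFDerivAt x h1
  have hnorm : HasFDerivAt (fun y : E2 => ‖y‖) ((‖x‖⁻¹) • innerSL ℝ x) x := by
    have heq : (fun y : E2 => Real.sqrt (‖y‖^2)) = fun y : E2 => ‖y‖ := by
      funext y; rw [Real.sqrt_sq (norm_nonneg y)]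
    rw [heq] at h3
    convert h3 using 1
    ext y
    rw [Real.sqrt_sq (norm_nonneg x)]
    simp only [ContinuousLinearMap.smul_apply, ContinuousLinearMap.coe_smul',
      Pi.smul_apply, smul_eq_mul, nsmul_eq_mul]
    push_cast
    field_simp
  have h4 : HasDerivAt u (deriv u ‖x‖) ‖x‖ := hu.hasDerivAt
  have := h4.comp_hasFDerivAt x hnorm
  rw [smul_smul] at this
  exact this

lemma norm_fderiv_radial (u : ℝ → ℝ) (x : E2) (hx : x ≠ 0)
    (hu : DifferentiableAt ℝ u ‖x‖) :
    ‖fderiv ℝ (fun y : E2 => u ‖y‖) x‖ = |deriv u ‖x‖| := by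
  rw [(hasFDerivAt_radial u x hx hu).fderiv]
  rw [norm_smul, innerSL_apply_norm]
  have hnx : (0:ℝ) < ‖x‖ := norm_pos_iff.mpr hx
  rw [Real.norm_eq_abs, abs_mul, abs_inv, abs_norm]
  field_simp

lemma volume_ball_E2 (r : ℝ) (hr : 0 ≤ r) :
    volume (ball (0:E2) r) = ENNReal.ofReal (Real.pi * r^2) := by
  rw [EuclideanSpace.volume_ball]
  simp only [Fintype.card_fin]
  have h2 : ((2:ℕ):ℝ) / 2 + 1 = 2 := by norm_num
  rw [h2]
  have hG : Real.Gamma 2 = 1 := by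
    have h21 : (2:ℝ) = 1 + 1 := by norm_num
    rw [h21, Real.Gamma_add_one one_ne_zero, Real.Gamma_one, mul_one]
  rw [hG, Real.sq_sqrt Real.pi_nonneg]
  rw [← ENNReal.ofReal_pow hr, ← ENNReal.ofReal_mul (by positivity)]
  ring_nf

lemma deriv_nonneg_of_strictMonoOn {u : ℝ → ℝ} {a b r : ℝ} (hu : DifferentiableAt ℝ u r)
    (hm : StrictMonoOn u (Set.Ioo a b)) (hr : r ∈ Set.Ioo a b) : 0 ≤ deriv u r := by
  have ht : Filter.Tendsto (slope u r) (nhdsWithin r (Set.Ioo r b)) (nhds (deriv u r)) := by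
    have := hasDerivAt_iff_tendsto_slope.mp hu.hasDerivAt
    apply this.mono_left
    apply nhdsWithin_mono
    intro s hs
    exact Set.mem_compl_singleton_iff.mpr (ne_of_gt hs.1)
  have hne : (nhdsWithin r (Set.Ioo r b)).NeBot := by
    apply mem_closure_iff_nhdsWithin_neBot.mp
    rw [closure_Ioo (ne_of_lt hr.2)]
    exact ⟨le_refl r, le_of_lt hr.2⟩
  refine ge_of_tendsto ht ?_
  filter_upwards [self_mem_nhdsWithin] with s hs
  have hsr : r < s := hs.1
  have : u r < u s := hm hr ⟨lt_trans hr.1 hsr, hs.2⟩ hsr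
  rw [slope_def_field]
  exact div_nonneg (by linarith) (by linarith)

lemma U_antitone (R0 R1 Φ μ0 : ℝ) (hR0 : 0 < R0) (hR : R0 < R1) (hΦ1 : Φ^2 ≤ 1)
    (hμ : 0 ≤ μ0) (u : ℝ → ℝ) (hu : ContDiff ℝ 2 u)
    (hode : ∀ r ∈ Set.Ioo R0 R1,
      -(deriv (deriv u) r) - (1/r) * deriv u r + (Φ^2/r^2) * u r = μ0 * u r)
    (hupos : ∀ r ∈ Set.Ioo R0 R1, 0 ≤ u r)
    (hder : ∀ r ∈ Set.Ioo R0 R1, 0 ≤ deriv u r) :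
    AntitoneOn (fun r => (deriv u r)^2 + Φ^2 * (u r)^2 / r^2) (Set.Icc R0 R1) := by
  have hu1 : ContDiff ℝ 1 (deriv u) := by
    have := (contDiff_succ_iff_deriv (n := 1)).mp (by norm_num at hu ⊢; exact hu)
    exact this.2.2
  have hdu : Differentiable ℝ u := hu.differentiable (by norm_num)
  have hddu : Differentiable ℝ (deriv u) := hu1.differentiable (by norm_num)
  have hV : ∀ r ∈ Set.Ioo R0 R1, HasDerivAt (fun r => (deriv u r)^2 + Φ^2 * (u r)^2 / r^2)
      (2 * deriv u r * deriv (deriv u) r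
        + Φ^2 * ((2 * u r * deriv u r) * r^2 - (u r)^2 * (2*r)) / (r^2)^2) r := by
    intro r hr
    have hr0 : r ≠ 0 := ne_of_gt (lt_trans hR0 hr.1)
    have h1 : HasDerivAt (fun r => (deriv u r)^2) (2 * deriv u r * deriv (deriv u) r) r := by
      have := ((hddu r).hasDerivAt).pow 2
      simpa [Pi.pow_def, mul_comm, mul_assoc, mul_left_comm] using this
    have h2 : HasDerivAt (fun r => (u r)^2) (2 * u r * deriv u r) r := by
      have := ((hdu r).hasDerivAt).pow 2
      simpa [Pi.pow_def, mul_comm, mul_assoc, mul_left_comm] using this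
    have h3 : HasDerivAt (fun r : ℝ => r^2) (2*r) r := by
      simpa [Pi.pow_def] using (hasDerivAt_id r).pow 2
    have h4 : HasDerivAt (fun r => (u r)^2 / r^2)
        (((2 * u r * deriv u r) * r^2 - (u r)^2 * (2*r)) / (r^2)^2) r :=
      h2.div h3 (pow_ne_zero 2 hr0)
    have h6 := h1.fun_add ((h4.const_mul (Φ^2)))
    have hfe : (fun r => (deriv u r)^2 + Φ^2 * (u r)^2 / r^2)
        = fun r => (deriv u r)^2 + Φ^2 * ((u r)^2 / r^2) := by
      funext s; ring
    rw [hfe]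
    exact h6.congr_deriv (by ring)
  apply antitoneOn_of_deriv_nonpos (convex_Icc R0 R1)
  · apply ContinuousOn.add
    · exact ((hu1.continuous).pow 2).continuousOn
    · apply ContinuousOn.div
      · exact (continuous_const.mul ((hu.continuous).pow 2)).continuousOn
      · exact (continuous_pow 2).continuousOn
      · intro r hr
        exact pow_ne_zero 2 (ne_of_gt (lt_of_lt_of_le hR0 hr.1))
  · intro r hr
    rw [interior_Icc] at hr
    exact (hV r hr).differentiableAt.differentiableWithinAt
  · intro r hr
    rw [interior_Icc] at hr
    rw [(hV r hr).deriv]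
    have hr0 : 0 < r := lt_trans hR0 hr.1
    have hode' := hode r hr
    have hupos' := hupos r hr
    have hder' := hder r hr
    have hΦ0 : 0 ≤ Φ^2 := sq_nonneg Φ
    have hΦ4 : Φ^2 * Φ^2 ≤ Φ^2 := by nlinarith
    have huu : deriv (deriv u) r = -(1/r) * deriv u r + (Φ^2/r^2) * u r - μ0 * u r := by
      field_simp at hode' ⊢; linarith
    rw [huu]
    set a := deriv u r
    set v := u r
    have key : (a * r - Φ^2 * v)^2 ≥ 0 := sq_nonneg _
    have heq : 2 * a * (-(1 / r) * a + Φ ^ 2 / r ^ 2 * v - μ0 * v)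
        + Φ ^ 2 * (2 * v * a * r ^ 2 - v ^ 2 * (2 * r)) / (r ^ 2) ^ 2
        = (-(2*a^2*r^3) + 4*Φ^2*v*a*r^2 - 2*Φ^2*v^2*r - 2*μ0*a*v*r^4)/r^4 := by
      field_simp; ring
    rw [heq]
    apply div_nonpos_of_nonpos_of_nonneg _ (by positivity)
    nlinarith [mul_nonneg (mul_nonneg (sq_nonneg (a*r - Φ^2*v)) (le_of_lt hr0)) (by norm_num : (0:ℝ) ≤ 2),
      mul_nonneg (mul_nonneg (mul_nonneg (sub_nonneg.mpr hΦ4) (sq_nonneg v)) (le_of_lt hr0)) (by norm_num : (0:ℝ) ≤ 2),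
      mul_nonneg (mul_nonneg (mul_nonneg hμ hder') hupos') (by positivity : (0:ℝ) ≤ r^4)]
theorem stmt_15 (R0 R1 Φ μ0 : ℝ) (hR0 : 0 < R0) (hR : R0 < R1)
    (hΦ : Φ ∈ Set.Icc (0:ℝ) (1/2))
    (Ω : Set E2) (hΩo : IsOpen Ω) (hΩb : Bornology.IsBounded Ω)
    (hsub : closure (ball (0:E2) R0) ⊆ Ω)
    (hvol : volume Ω = ENNReal.ofReal (Real.pi * R1^2))
    (hne : 0 < volume (symmDiff Ω (ball (0:E2) R1)))
    (u : ℝ → ℝ) (hu : ContDiff ℝ 2 u)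
    (hode : ∀ r ∈ Set.Ioo R0 R1,
      -(deriv (deriv u) r) - (1/r) * deriv u r + (Φ^2/r^2) * u r = μ0 * u r)
    (hD : u R0 = 0) (hN : deriv u R1 = 0)
    (hpos : ∀ r ∈ Set.Ioo R0 R1, 0 < u r)
    (hmono : StrictMonoOn u (Set.Ioo R0 R1))
    (hμ0 : μ0 = (∫ x in ball (0:E2) R1 \ closure (ball (0:E2) R0),
          (‖fderiv ℝ (fun y : E2 => u ‖y‖) x‖^2 + (Φ^2/‖x‖^2) * (u ‖x‖)^2)) /
        (∫ x in ball (0:E2) R1 \ closure (ball (0:E2) R0), (u ‖x‖)^2))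
    (f : E2 → ℝ)
    (hf : ∀ x, f x = if ‖x‖ ≤ R0 then 0 else if ‖x‖ < R1 then u ‖x‖ else u R1) :
    (∫ x in Ω \ closure (ball (0:E2) R0),
        (‖fderiv ℝ f x‖^2 + (Φ^2/‖x‖^2) * (f x)^2)) /
      (∫ x in Ω \ closure (ball (0:E2) R0), (f x)^2) < μ0 := by
  have h0R1 : (0:ℝ) < R1 := lt_trans hR0 hR
  have hΦ2 : Φ^2 ≤ 1 := by nlinarith [hΦ.1, hΦ.2]
  set C : Set E2 := closure (ball (0:E2) R0) with hCdef
  set B : Set E2 := ball (0:E2) R1 with hBdef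
  set A : Set E2 := B \ C with hAdef
  set D : Set E2 := Ω \ C with hDdef
  have hCc : C = closedBall (0:E2) R0 := closure_ball 0 (ne_of_gt hR0)
  have hmemC : ∀ x : E2, x ∈ C ↔ ‖x‖ ≤ R0 := by
    intro x; rw [hCc, mem_closedBall, dist_zero_right]
  have hmemB : ∀ x : E2, x ∈ B ↔ ‖x‖ < R1 := by
    intro x; rw [hBdef, mem_ball, dist_zero_right]
  have hmemA : ∀ x : E2, x ∈ A ↔ R0 < ‖x‖ ∧ ‖x‖ < R1 := by
    intro x
    simp only [hAdef, Set.mem_diff, hmemB, hmemC]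
    constructor
    · rintro ⟨h1, h2⟩; exact ⟨lt_of_not_ge h2, h1⟩
    · rintro ⟨h1, h2⟩; exact ⟨h2, not_le.mpr h1⟩
  have hCB : C ⊆ B := by
    intro x hx; rw [hmemB]; rw [hmemC] at hx; linarith
  have hmC : MeasurableSet C := isClosed_closure.measurableSet
  have hmB : MeasurableSet B := measurableSet_ball
  have hmA : MeasurableSet A := hmB.diff hmC
  have hmΩ : MeasurableSet Ω := hΩo.measurableSet
  have hmD : MeasurableSet D := hmΩ.diff hmC
  have hAopen : IsOpen A := isOpen_ball.sdiff isClosed_closure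
  -- basic function facts
  have hdu : Differentiable ℝ u := hu.differentiable (by norm_num)
  have hcu : Continuous u := hu.continuous
  have hcdu : Continuous (deriv u) := hu.continuous_deriv (by norm_num)
  have hfA : ∀ x ∈ A, f x = u ‖x‖ := by
    intro x hx
    rw [hmemA] at hx
    rw [hf x, if_neg (not_le.mpr hx.1), if_pos hx.2]
  have hfout : ∀ x : E2, R1 ≤ ‖x‖ → f x = u R1 := by
    intro x hx
    rw [hf x, if_neg (by push_neg; linarith), if_neg (not_lt.mpr hx)]
  have hgradA : ∀ x ∈ A, fderiv ℝ f x = fderiv ℝ (fun y : E2 => u ‖y‖) x := by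
    intro x hx
    apply Filter.EventuallyEq.fderiv_eq
    filter_upwards [hAopen.mem_nhds hx] with y hy
    exact hfA y hy
  have hnormA : ∀ x ∈ A, ‖fderiv ℝ (fun y : E2 => u ‖y‖) x‖ = |deriv u ‖x‖| := by
    intro x hx
    rw [hmemA] at hx
    exact norm_fderiv_radial u x (by
      intro h0; rw [h0] at hx; simp at hx; linarith [hx.1]) (hdu _)
  have hgradout : ∀ x : E2, R1 < ‖x‖ → fderiv ℝ f x = 0 := by
    intro x hx
    have hopen : IsOpen {y : E2 | R1 < ‖y‖} := isOpen_lt continuous_const continuous_norm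
    have : fderiv ℝ f x = fderiv ℝ (fun _ : E2 => u R1) x := by
      apply Filter.EventuallyEq.fderiv_eq
      filter_upwards [hopen.mem_nhds hx] with y hy
      exact hfout y (le_of_lt hy)
    rw [this, fderiv_fun_const]
    rfl
  -- volumes
  have vC : volume C = ENNReal.ofReal (Real.pi * R0^2) := by
    rw [hCc, Measure.addHaar_closedBall_eq_addHaar_ball]
    exact volume_ball_E2 R0 (le_of_lt hR0)
  have vB : volume B = ENNReal.ofReal (Real.pi * R1^2) := volume_ball_E2 R1 (le_of_lt h0R1)
  have vCfin : volume C ≠ ⊤ := by rw [vC]; exact ENNReal.ofReal_ne_top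
  have vBfin : volume B ≠ ⊤ := by rw [vB]; exact ENNReal.ofReal_ne_top
  have vA : volume A = volume B - volume C :=
    measure_diff hCB hmC.nullMeasurableSet vCfin
  have vD : volume D = volume B - volume C := by
    rw [hDdef, measure_diff hsub hmC.nullMeasurableSet vCfin, hvol, vB]
  have vDA' : volume D = volume A := by rw [vA, vD]
  have vAfin : volume A ≠ ⊤ := by
    rw [vA]; exact (tsub_le_self.trans_lt (lt_top_iff_ne_top.mpr vBfin)).ne
  have vDfin : volume D ≠ ⊤ := by rw [vDA']; exact vAfin
  have vinterfin : volume (D ∩ A) ≠ ⊤ := by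
    exact ((measure_mono Set.inter_subset_right).trans_lt (lt_top_iff_ne_top.mpr vAfin)).ne
  have vDA : volume (D \ A) = volume (A \ D) := by
    have k1 : volume (D ∩ A) + volume (D \ A) = volume D := measure_inter_add_diff D hmA
    have k2 : volume (A ∩ D) + volume (A \ D) = volume A := measure_inter_add_diff A hmD
    rw [Set.inter_comm] at k2
    rw [← vDA', ← k1] at k2
    exact ((ENNReal.add_right_inj vinterfin).mp k2.symm)
  have hDAeq : D \ A = Ω \ B := by
    rw [hDdef, hAdef]
    ext x
    simp only [Set.mem_diff]
    constructor
    · rintro ⟨⟨h1, h2⟩, h3⟩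
      refine ⟨h1, fun hB => h3 ⟨hB, h2⟩⟩
    · rintro ⟨h1, h2⟩
      have hxC : x ∉ C := fun hC => h2 (hCB hC)
      exact ⟨⟨h1, hxC⟩, fun hA => h2 hA.1⟩
  have hADeq : A \ D = A \ Ω := by
    rw [hDdef, hAdef]
    ext x
    simp only [Set.mem_diff]
    constructor
    · rintro ⟨⟨h1, h2⟩, h3⟩
      exact ⟨⟨h1, h2⟩, fun hΩx => h3 ⟨hΩx, h2⟩⟩
    · rintro ⟨⟨h1, h2⟩, h3⟩
      exact ⟨⟨h1, h2⟩, fun hd => h3 hd.1⟩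
  have hADpos : 0 < volume (A \ D) := by
    by_contra hcon
    push_neg at hcon
    have hAD0 : volume (A \ D) = 0 := le_antisymm hcon zero_le
    have hDA0 : volume (D \ A) = 0 := by rw [vDA]; exact hAD0
    have hsd : symmDiff Ω B ⊆ (D \ A) ∪ (A \ D) := by
      rw [hDAeq, hADeq, Set.symmDiff_def]
      apply Set.union_subset
      · intro x hx; left; exact hx
      · intro x hx; right
        exact ⟨⟨hx.1, fun hC => hx.2 (hsub hC)⟩, hx.2⟩
    have hmle := measure_mono (μ := volume) hsd
    rw [measure_union_null hDA0 hAD0] at hmle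
    exact lt_irrefl 0 (lt_of_lt_of_le hne hmle)
  -- integrand notation
  set G : E2 → ℝ := fun x => ‖fderiv ℝ f x‖^2 + (Φ^2/‖x‖^2) * (f x)^2 with hGdef
  set GA : E2 → ℝ := fun x => ‖fderiv ℝ (fun y : E2 => u ‖y‖) x‖^2 + (Φ^2/‖x‖^2) * (u ‖x‖)^2 with hGAdef
  set H : E2 → ℝ := fun x => (deriv u ‖x‖)^2 + Φ^2 * (u ‖x‖)^2 / ‖x‖^2 with hHdef
  set W : E2 → ℝ := fun x => (u ‖x‖)^2 with hWdef
  have hGA_H : ∀ x ∈ A, GA x = H x := by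
    intro x hx
    simp only [hGAdef, hHdef]
    rw [hnormA x hx, sq_abs]
    ring
  have hG_H : ∀ x ∈ A, G x = H x := by
    intro x hx
    have h1 : G x = GA x := by
      simp only [hGdef, hGAdef]
      rw [hgradA x hx, hfA x hx]
    rw [h1]; exact hGA_H x hx
  have hGA_nonneg : ∀ x : E2, 0 ≤ GA x := by
    intro x
    apply add_nonneg (sq_nonneg _)
    exact mul_nonneg (div_nonneg (sq_nonneg _) (sq_nonneg _)) (sq_nonneg _)
  have hW_nonneg : ∀ x : E2, 0 ≤ W x := fun x => sq_nonneg _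
  have hμnn : 0 ≤ μ0 := by
    rw [hμ0]
    exact div_nonneg (setIntegral_nonneg hmA fun x _ => hGA_nonneg x)
      (setIntegral_nonneg hmA fun x _ => hW_nonneg x)
  -- monotonicity facts
  have hder0 : ∀ r ∈ Set.Ioo R0 R1, 0 ≤ deriv u r :=
    fun r hr => deriv_nonneg_of_strictMonoOn (hdu r) hmono hr
  have humono : MonotoneOn u (Set.Icc R0 R1) := by
    apply monotoneOn_of_deriv_nonneg (convex_Icc R0 R1) hcu.continuousOn
    · intro r _; exact (hdu r).differentiableWithinAt
    · intro r hr; rw [interior_Icc] at hr; exact hder0 r hr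
  have hult : ∀ r ∈ Set.Ioo R0 R1, u r < u R1 := by
    intro r hr
    have h1 : u r < u ((r+R1)/2) :=
      hmono hr ⟨by linarith [hr.1], by linarith [hr.2]⟩ (by linarith [hr.2])
    have h2 : u ((r+R1)/2) ≤ u R1 :=
      humono ⟨by linarith [hr.1], by linarith [hr.2]⟩ ⟨le_of_lt hR, le_refl _⟩
        (by linarith [hr.2])
    linarith
  have hmid : (R0+R1)/2 ∈ Set.Ioo R0 R1 := ⟨by linarith, by linarith⟩
  have huR1pos : 0 < u R1 := lt_trans (hpos _ hmid) (hult _ hmid)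
  have hUanti := U_antitone R0 R1 Φ μ0 hR0 hR hΦ2 hμnn u hu hode
    (fun r hr => le_of_lt (hpos r hr)) hder0
  set c : ℝ := (Φ^2/R1^2) * (u R1)^2 with hcdef
  have hcnn : 0 ≤ c := mul_nonneg (div_nonneg (sq_nonneg _) (sq_nonneg _)) (sq_nonneg _)
  have hHc : ∀ x ∈ A, c ≤ H x := by
    intro x hx
    rw [hmemA] at hx
    have h1 := hUanti ⟨le_of_lt hx.1, le_of_lt hx.2⟩ ⟨le_of_lt hR, le_refl R1⟩ (le_of_lt hx.2)
    have h2 : (deriv u R1)^2 + Φ^2 * (u R1)^2 / R1^2 = c := by rw [hN]; ring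
    simp only [hHdef]
    rw [← h2]
    exact h1
  -- compact annulus and integrability
  set K : Set E2 := closedBall 0 R1 \ ball 0 R0 with hKdef
  have hKcomp : IsCompact K := (isCompact_closedBall _ _).diff isOpen_ball
  have hKnorm : ∀ x ∈ K, R0 ≤ ‖x‖ ∧ ‖x‖ ≤ R1 := by
    intro x hx
    obtain ⟨h1, h2⟩ := hx
    rw [mem_closedBall, dist_zero_right] at h1
    rw [mem_ball, dist_zero_right] at h2
    exact ⟨not_lt.mp h2, h1⟩
  have hAK : A ⊆ K := by
    intro x hx
    rw [hmemA] at hx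
    refine ⟨?_, ?_⟩
    · rw [mem_closedBall, dist_zero_right]; exact le_of_lt hx.2
    · rw [mem_ball, dist_zero_right]; push_neg; exact le_of_lt hx.1
  have hHcontK : ContinuousOn H K := by
    apply ContinuousOn.add
    · exact ((hcdu.comp continuous_norm).pow 2).continuousOn
    · apply ContinuousOn.div
      · exact (continuous_const.mul ((hcu.comp continuous_norm).pow 2)).continuousOn
      · exact (continuous_norm.pow 2).continuousOn
      · intro x hx
        have hxn : 0 < ‖x‖ := lt_of_lt_of_le hR0 (hKnorm x hx).1
        positivity
  have hHintA : IntegrableOn H A := (hHcontK.integrableOn_compact hKcomp).mono_set hAK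
  obtain ⟨M, hM⟩ := hKcomp.exists_bound_of_continuousOn hHcontK
  -- big ball containing everything
  obtain ⟨RR, hRRpos, hRR⟩ :
      ∃ RR, 0 < RR ∧ Ω ∪ closedBall (0:E2) R1 ⊆ closedBall 0 RR := by
    obtain ⟨RR', hRR'⟩ := (hΩb.union isBounded_closedBall).subset_closedBall 0
    refine ⟨max RR' 1, by positivity, hRR'.trans (closedBall_subset_closedBall (le_max_left _ _))⟩
  have hWint : IntegrableOn W (closedBall (0:E2) RR) :=
    (((hcu.comp continuous_norm).pow 2).continuousOn).integrableOn_compact (isCompact_closedBall _ _)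
  have hDRR : D ⊆ closedBall (0:E2) RR := fun x hx => hRR (Or.inl hx.1)
  have hARR : A ⊆ closedBall (0:E2) RR := fun x hx =>
    hRR (Or.inr (closedBall_subset_closedBall (le_refl R1) (ball_subset_closedBall hx.1)))
  -- measurability of G
  have hfmeas : Measurable f := by
    have hfe : f = fun x => if ‖x‖ ≤ R0 then 0 else if ‖x‖ < R1 then u ‖x‖ else u R1 :=
      funext hf
    rw [hfe]
    apply Measurable.ite (measurableSet_le measurable_norm measurable_const) measurable_const
    exact Measurable.ite (measurableSet_lt measurable_norm measurable_const)
      ((hcu.comp continuous_norm).measurable) measurable_const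
  have hGm : Measurable G := by
    apply Measurable.add
    · exact (measurable_fderiv ℝ f).norm.pow measurable_const
    · exact (measurable_const.div (measurable_norm.pow measurable_const)).mul
        (hfmeas.pow measurable_const)
  have hsph : volume (sphere (0:E2) R1) = 0 := Measure.addHaar_sphere (μ := volume) _ _
  have hGboundae : ∀ᵐ x ∂volume.restrict D, ‖G x‖ ≤ max M c := by
    rw [ae_restrict_iff' hmD]
    filter_upwards [compl_mem_ae_iff.mpr hsph] with x hx hxD
    have hxR0 : R0 < ‖x‖ := by
      have := hxD.2
      rw [hmemC] at this
      exact lt_of_not_ge this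
    rcases lt_trichotomy ‖x‖ R1 with hlt | heq | hgt
    · have hxA : x ∈ A := by rw [hmemA]; exact ⟨hxR0, hlt⟩
      rw [hG_H x hxA]
      exact le_max_of_le_left (hM x (hAK hxA))
    · exfalso; apply hx; rw [mem_sphere, dist_zero_right]; exact heq
    · have hG0 : G x = (Φ^2/‖x‖^2) * (u R1)^2 := by
        simp only [hGdef]
        rw [hgradout x hgt, hfout x (le_of_lt hgt)]
        simp
      have hGle : G x ≤ c := by
        rw [hG0, hcdef]
        apply mul_le_mul_of_nonneg_right _ (sq_nonneg _)
        apply div_le_div_of_nonneg_left (sq_nonneg Φ) (by positivity)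
        nlinarith [hgt, h0R1]
      have hGnn : 0 ≤ G x := by
        rw [hG0]; positivity
      rw [Real.norm_eq_abs, abs_of_nonneg hGnn]
      exact le_max_of_le_right hGle
  have hGintD : IntegrableOn G D :=
    Measure.integrableOn_of_bounded vDfin hGm.aestronglyMeasurable hGboundae
  -- energy comparison
  have vDnAfin : volume (D \ A) < ⊤ :=
    (measure_mono Set.diff_subset).trans_lt (lt_top_iff_ne_top.mpr vDfin)
  have vAnDfin : volume (A \ D) < ⊤ :=
    (measure_mono Set.diff_subset).trans_lt (lt_top_iff_ne_top.mpr vAfin)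
  have e1 : (∫ x in D ∩ A, G x) + (∫ x in D \ A, G x) = ∫ x in D, G x :=
    integral_inter_add_diff hmA hGintD
  have e2 : ∫ x in D ∩ A, G x = ∫ x in D ∩ A, H x :=
    setIntegral_congr_fun (hmD.inter hmA) (fun x hx => hG_H x hx.2)
  have e3 : ∫ x in D \ A, G x ≤ c * (volume (D \ A)).toReal := by
    have hconst : ∫ _x in D \ A, c = c * (volume (D \ A)).toReal := by
      rw [setIntegral_const, smul_eq_mul, mul_comm, measureReal_def]
    rw [← hconst]
    apply setIntegral_mono_ae_restrict (hGintD.mono_set Set.diff_subset)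
      ((integrableOn_const_iff).mpr (Or.inr vDnAfin))
    rw [Filter.EventuallyLE, ae_restrict_iff' (hmD.diff hmA)]
    filter_upwards [compl_mem_ae_iff.mpr hsph] with x hx hxDA
    have hxΩB : x ∈ Ω \ B := by rw [← hDAeq]; exact hxDA
    have hxR1 : R1 ≤ ‖x‖ := by
      have := hxΩB.2; rw [hmemB] at this; exact not_lt.mp this
    have hgt : R1 < ‖x‖ := by
      rcases lt_or_eq_of_le hxR1 with h | h
      · exact h
      · exfalso; apply hx; rw [mem_sphere, dist_zero_right]; exact h.symm
    have hG0 : G x = (Φ^2/‖x‖^2) * (u R1)^2 := by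
      simp only [hGdef]
      rw [hgradout x hgt, hfout x (le_of_lt hgt)]
      simp
    rw [hG0, hcdef]
    apply mul_le_mul_of_nonneg_right _ (sq_nonneg _)
    apply div_le_div_of_nonneg_left (sq_nonneg Φ) (by positivity)
    nlinarith [hgt, h0R1]
  have e4 : c * (volume (A \ D)).toReal ≤ ∫ x in A \ D, H x := by
    have hconst : ∫ _x in A \ D, c = c * (volume (A \ D)).toReal := by
      rw [setIntegral_const, smul_eq_mul, mul_comm, measureReal_def]
    rw [← hconst]
    exact setIntegral_mono_on ((integrableOn_const_iff).mpr (Or.inr vAnDfin))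
      (hHintA.mono_set Set.diff_subset) (hmA.diff hmD) (fun x hx => hHc x hx.1)
  have e5 : (∫ x in A ∩ D, H x) + (∫ x in A \ D, H x) = ∫ x in A, H x :=
    integral_inter_add_diff hmD hHintA
  have energy : ∫ x in D, G x ≤ ∫ x in A, H x := by
    rw [← e1, ← e5]
    rw [Set.inter_comm A D]
    have hvol_eq : (volume (D \ A)).toReal = (volume (A \ D)).toReal := by rw [vDA]
    rw [e2]
    have := e3
    rw [hvol_eq] at this
    linarith
  -- mass comparison
  have hWintA : IntegrableOn W A := hWint.mono_set hARR
  have hf2m : Measurable (fun x => (f x)^2) := hfmeas.pow measurable_const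
  obtain ⟨Mu, hMu⟩ :=
    (isCompact_Icc (a := R0) (b := R1)).exists_bound_of_continuousOn hcu.continuousOn
  have hMunn : 0 ≤ Mu := le_trans (norm_nonneg _) (hMu R0 ⟨le_refl _, le_of_lt hR⟩)
  have hfbound : ∀ x : E2, ‖(f x)^2‖ ≤ Mu^2 := by
    intro x
    have habs : ‖f x‖ ≤ Mu := by
      rw [hf x]
      split_ifs with h1 h2
      · simpa using hMunn
      · exact hMu ‖x‖ ⟨le_of_lt (not_le.mp h1), le_of_lt h2⟩
      · exact hMu R1 ⟨le_of_lt hR, le_refl _⟩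
    calc ‖(f x)^2‖ = ‖f x‖^2 := by rw [norm_pow]
    _ ≤ Mu^2 := by nlinarith [norm_nonneg (f x)]
  have hfintD : IntegrableOn (fun x => (f x)^2) D :=
    Measure.integrableOn_of_bounded vDfin hf2m.aestronglyMeasurable
      (ae_of_all _ fun x => hfbound x)
  have m1 : (∫ x in D ∩ A, (f x)^2) + (∫ x in D \ A, (f x)^2) = ∫ x in D, (f x)^2 :=
    integral_inter_add_diff hmA hfintD
  have m2 : ∫ x in D ∩ A, (f x)^2 = ∫ x in D ∩ A, W x :=
    setIntegral_congr_fun (hmD.inter hmA)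
      (fun x hx => by simp only [hWdef]; rw [hfA x hx.2])
  have m3 : ∫ x in D \ A, (f x)^2 = (u R1)^2 * (volume (A \ D)).toReal := by
    have hcg : ∀ x ∈ D \ A, (f x)^2 = (u R1)^2 := by
      intro x hx
      have hxΩB : x ∈ Ω \ B := by rw [← hDAeq]; exact hx
      have hxR1 : R1 ≤ ‖x‖ := by
        have := hxΩB.2; rw [hmemB] at this; exact not_lt.mp this
      rw [hfout x hxR1]
    rw [setIntegral_congr_fun (hmD.diff hmA) hcg, setIntegral_const, smul_eq_mul, measureReal_def, vDA,
      mul_comm]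
  have m4 : ∫ x in A \ D, W x < (u R1)^2 * (volume (A \ D)).toReal := by
    have hgint : IntegrableOn (fun x => (u R1)^2 - W x) (A \ D) :=
      ((integrableOn_const_iff).mpr (Or.inr vAnDfin)).sub (hWintA.mono_set Set.diff_subset)
    have hgpos : ∀ x ∈ A \ D, 0 < (u R1)^2 - W x := by
      intro x hx
      have hxA := hx.1
      rw [hmemA] at hxA
      have h1 : 0 < u ‖x‖ := hpos _ hxA
      have h2 : u ‖x‖ < u R1 := hult _ hxA
      simp only [hWdef]
      nlinarith
    have h0 : 0 < ∫ x in A \ D, ((u R1)^2 - W x) := by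
      rw [setIntegral_pos_iff_support_of_nonneg_ae]
      · apply lt_of_lt_of_le hADpos
        apply measure_mono
        intro x hx
        exact ⟨ne_of_gt (hgpos x hx), hx⟩
      · rw [Filter.EventuallyLE, ae_restrict_iff' (hmA.diff hmD)]
        exact ae_of_all _ (fun x hx => le_of_lt (hgpos x hx))
      · exact hgint
    have hsplit : ∫ x in A \ D, ((u R1)^2 - W x)
        = (u R1)^2 * (volume (A \ D)).toReal - ∫ x in A \ D, W x := by
      rw [integral_sub ((integrableOn_const_iff (C := (u R1)^2)).mpr (Or.inr vAnDfin))
        (hWintA.mono_set Set.diff_subset), setIntegral_const, smul_eq_mul, mul_comm, measureReal_def]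
    rw [hsplit] at h0
    linarith
  have m5 : (∫ x in A ∩ D, W x) + (∫ x in A \ D, W x) = ∫ x in A, W x :=
    integral_inter_add_diff hmD hWintA
  have mass : ∫ x in A, W x < ∫ x in D, (f x)^2 := by
    rw [← m1, ← m5, Set.inter_comm A D, m2, m3]
    linarith
  have vApos : 0 < volume A := by
    rw [vA]
    rw [tsub_pos_iff_lt, vC, vB]
    rw [ENNReal.ofReal_lt_ofReal_iff (by positivity)]
    have hsq : R0^2 < R1^2 := by nlinarith
    exact mul_lt_mul_of_pos_left hsq Real.pi_pos
  have MApos : 0 < ∫ x in A, W x := by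
    rw [setIntegral_pos_iff_support_of_nonneg_ae]
    · apply lt_of_lt_of_le vApos
      apply measure_mono
      intro x hx
      have hxA := hx
      rw [hmemA] at hxA
      have h1 : 0 < u ‖x‖ := hpos _ hxA
      refine ⟨?_, hx⟩
      simp only [hWdef, Function.mem_support]
      positivity
    · rw [Filter.EventuallyLE, ae_restrict_iff' hmA]
      exact ae_of_all _ (fun x hx => hW_nonneg x)
    · exact hWintA
  -- positivity of annulus energy
  have hEAH : ∫ x in A, GA x = ∫ x in A, H x :=
    setIntegral_congr_fun hmA (fun x hx => hGA_H x hx)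
  set P : E2 → ℝ := fun x => (deriv u ‖x‖)^2 with hPdef
  have hPcont : Continuous P := (hcdu.comp continuous_norm).pow 2
  have hPintRR : IntegrableOn P (closedBall (0:E2) RR) :=
    (hPcont.continuousOn).integrableOn_compact (isCompact_closedBall _ _)
  have hPintA : IntegrableOn P A := hPintRR.mono_set hARR
  have step1 : ∫ x in A, P x ≤ ∫ x in A, H x := by
    apply setIntegral_mono_on hPintA hHintA hmA
    intro x hx
    have hxn : R0 < ‖x‖ := ((hmemA x).mp hx).1
    have hxn' : 0 < ‖x‖ := lt_trans hR0 hxn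
    have hnn : 0 ≤ Φ^2 * (u ‖x‖)^2 / ‖x‖^2 := by positivity
    simp only [hHdef, hPdef]
    linarith
  -- find a point with positive derivative
  have haIoo : (2*R0+R1)/3 ∈ Set.Ioo R0 R1 := ⟨by linarith, by linarith⟩
  have hbIoo : (R0+2*R1)/3 ∈ Set.Ioo R0 R1 := ⟨by linarith, by linarith⟩
  have hab : (2*R0+R1)/3 < (R0+2*R1)/3 := by linarith
  obtain ⟨r0, hr0mem, hr0eq⟩ := exists_hasDerivAt_eq_slope u (deriv u) hab
    hcu.continuousOn (fun x _ => (hdu x).hasDerivAt)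
  have hr0Ioo : r0 ∈ Set.Ioo R0 R1 :=
    ⟨lt_trans haIoo.1 hr0mem.1, lt_trans hr0mem.2 hbIoo.2⟩
  have hq : 0 < deriv u r0 := by
    rw [hr0eq]
    have hu_ab : u ((2*R0+R1)/3) < u ((R0+2*R1)/3) := hmono haIoo hbIoo hab
    apply div_pos (by linarith) (by linarith)
  -- find subannulus where derivative stays positive
  have hSopen : IsOpen {r : ℝ | deriv u r0 / 2 < deriv u r} :=
    isOpen_lt continuous_const hcdu
  obtain ⟨ε, hεpos, hball⟩ := Metric.isOpen_iff.mp hSopen r0 (by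
    simp only [Set.mem_setOf_eq]; linarith)
  set ε' : ℝ := min ε (min (r0 - R0) (R1 - r0)) with hε'def
  have hε'pos : 0 < ε' := by
    apply lt_min hεpos
    exact lt_min (by linarith [hr0Ioo.1]) (by linarith [hr0Ioo.2])
  have hε'1 : ε' ≤ ε := min_le_left _ _
  have hε'2 : ε' ≤ r0 - R0 := le_trans (min_le_right _ _) (min_le_left _ _)
  have hε'3 : ε' ≤ R1 - r0 := le_trans (min_le_right _ _) (min_le_right _ _)
  set a' : ℝ := r0 - ε'/2 with ha'def
  set b' : ℝ := r0 + ε'/2 with hb'def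
  have ha'pos : 0 < a' := by
    have : R0 < r0 := hr0Ioo.1
    simp only [ha'def]; linarith
  have hab' : a' < b' := by simp only [ha'def, hb'def]; linarith
  have hb'R1 : b' < R1 := by simp only [hb'def]; linarith
  have hR0a' : R0 < a' := by simp only [ha'def]; linarith
  set S : Set E2 := ball (0:E2) b' \ closedBall 0 a' with hSdef
  have hmS : MeasurableSet S := measurableSet_ball.diff measurableSet_closedBall
  have hmemS : ∀ x : E2, x ∈ S ↔ a' < ‖x‖ ∧ ‖x‖ < b' := by
    intro x
    simp only [hSdef, Set.mem_diff, mem_ball, mem_closedBall, dist_zero_right]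
    constructor
    · rintro ⟨h1, h2⟩; exact ⟨lt_of_not_ge h2, h1⟩
    · rintro ⟨h1, h2⟩; exact ⟨h2, not_le.mpr h1⟩
  have hSsubA : S ⊆ A := by
    intro x hx
    rw [hmemS] at hx
    rw [hmemA]
    exact ⟨lt_trans hR0a' hx.1, lt_trans hx.2 hb'R1⟩
  have hSq : ∀ x ∈ S, deriv u r0 / 2 < deriv u ‖x‖ := by
    intro x hx
    rw [hmemS] at hx
    have hmem : ‖x‖ ∈ Metric.ball r0 ε := by
      rw [mem_ball, Real.dist_eq, abs_lt]
      simp only [ha'def, hb'def] at hx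
      constructor <;> linarith [hε'1, hε'pos]
    exact hball hmem
  have hSpos : 0 < volume S := by
    have hsubB : closedBall (0:E2) a' ⊆ ball 0 b' :=
      closedBall_subset_ball hab'
    rw [hSdef, measure_diff hsubB measurableSet_closedBall.nullMeasurableSet (by
      rw [Measure.addHaar_closedBall_eq_addHaar_ball, volume_ball_E2 a' (le_of_lt ha'pos)]
      exact ENNReal.ofReal_ne_top)]
    rw [Measure.addHaar_closedBall_eq_addHaar_ball, volume_ball_E2 a' (le_of_lt ha'pos),
      volume_ball_E2 b' (by linarith)]
    rw [tsub_pos_iff_lt, ENNReal.ofReal_lt_ofReal_iff (by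
      have hb'pos : 0 < b' := lt_trans ha'pos hab'
      positivity)]
    have : a'^2 < b'^2 := by nlinarith
    exact mul_lt_mul_of_pos_left this Real.pi_pos
  have hPSpos : 0 < ∫ x in S, P x := by
    rw [setIntegral_pos_iff_support_of_nonneg_ae]
    · apply lt_of_lt_of_le hSpos
      apply measure_mono
      intro x hx
      refine ⟨?_, hx⟩
      have h1 := hSq x hx
      simp only [hPdef, Function.mem_support]
      have : 0 < deriv u ‖x‖ := by linarith
      positivity
    · rw [Filter.EventuallyLE, ae_restrict_iff' hmS]
      exact ae_of_all _ (fun x _ => sq_nonneg _)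
    · exact hPintA.mono_set hSsubA
  have hPSA : ∫ x in S, P x ≤ ∫ x in A, P x := by
    apply setIntegral_mono_set hPintA
    · rw [Filter.EventuallyLE, ae_restrict_iff' hmA]
      exact ae_of_all _ (fun x _ => sq_nonneg _)
    · exact HasSubset.Subset.eventuallyLE hSsubA
  have EApos : 0 < ∫ x in A, GA x := by
    rw [hEAH]
    linarith
  -- final assembly
  have hmDpos : 0 < ∫ x in D, (f x)^2 := lt_trans MApos mass
  have energyA : ∫ x in D, G x ≤ ∫ x in A, GA x := by rw [hEAH]; exact energy
  rw [hμ0]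
  calc (∫ x in D, G x) / (∫ x in D, (f x)^2)
      ≤ (∫ x in A, GA x) / (∫ x in D, (f x)^2) := by
        exact (div_le_div_iff_of_pos_right hmDpos).mpr energyA
    _ < (∫ x in A, GA x) / (∫ x in A, W x) :=
        div_lt_div_of_pos_left EApos MApos mass
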